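/- Every standard model for (Σ, Φ) is elementarily equivalent to a countable standard model for (Σ, Φ). -/

import Mathlib

/-! ### First-order logic with inductively defined predicates (FOL_ID) -/

/-- A first-order signature with ordinary and inductive predicate symbols. -/
structure Signature : Type 1 where
  Func : Type
  arF : Func → ℕ
  Pred : Type
  arP : Pred → ℕ
  IndPred : Type
  arI : IndPred → ℕ

/-- Terms over a signature. -/
inductive Tm (S : Signature) : Type
  | var : ℕ → Tm S
  | func (f : S.Func) : (Fin (S.arF f) → Tm S) → Tm S

/-- Formulas of FOL_ID. -/
inductive Fm (S : Signature) : Type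
  | fals : Fm S
  | eq : Tm S → Tm S → Fm S
  | pred (Q : S.Pred) : (Fin (S.arP Q) → Tm S) → Fm S
  | ind (P : S.IndPred) : (Fin (S.arI P) → Tm S) → Fm S
  | not : Fm S → Fm S
  | and : Fm S → Fm S → Fm S
  | or : Fm S → Fm S → Fm S
  | imp : Fm S → Fm S → Fm S
  | all : ℕ → Fm S → Fm S
  | ex : ℕ → Fm S → Fm S

/-- A first-order structure for a signature. -/
structure Struc (S : Signature) : Type 1 where
  U : Type
  interpF (f : S.Func) : (Fin (S.arF f) → U) → U
  interpP (Q : S.Pred) : Set (Fin (S.arP Q) → U)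
  interpI : Set ((P : S.IndPred) × (Fin (S.arI P) → U))

/-- Evaluation of terms. -/
def Tm.eval {S : Signature} (M : Struc S) (ρ : ℕ → M.U) : Tm S → M.U
  | .var n => ρ n
  | .func f ts => M.interpF f (fun i => (ts i).eval M ρ)

/-- Update of a variable assignment. -/
def update {α : Type} (ρ : ℕ → α) (n : ℕ) (a : α) : ℕ → α :=
  fun m => if m = n then a else ρ m

/-- Tarskian satisfaction. -/
def Sat {S : Signature} (M : Struc S) (ρ : ℕ → M.U) : Fm S → Prop
  | .fals => False
  | .eq t u => t.eval M ρ = u.eval M ρ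
  | .pred Q ts => (fun i => (ts i).eval M ρ) ∈ M.interpP Q
  | .ind P ts => ⟨P, fun i => (ts i).eval M ρ⟩ ∈ M.interpI
  | .not A => ¬ Sat M ρ A
  | .and A B => Sat M ρ A ∧ Sat M ρ B
  | .or A B => Sat M ρ A ∨ Sat M ρ B
  | .imp A B => Sat M ρ A → Sat M ρ B
  | .all n A => ∀ a : M.U, Sat M (update ρ n a) A
  | .ex n A => ∃ a : M.U, Sat M (update ρ n a) A

/-- Free variables of a term. -/
def Tm.fv {S : Signature} : Tm S → Finset ℕ
  | .var n => {n}
  | .func _ ts => Finset.univ.biUnion (fun i => (ts i).fv)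

/-- Free variables of a formula. -/
def Fm.fv {S : Signature} : Fm S → Finset ℕ
  | .fals => ∅
  | .eq t u => t.fv ∪ u.fv
  | .pred _ ts => Finset.univ.biUnion (fun i => (ts i).fv)
  | .ind _ ts => Finset.univ.biUnion (fun i => (ts i).fv)
  | .not A => A.fv
  | .and A B => A.fv ∪ B.fv
  | .or A B => A.fv ∪ B.fv
  | .imp A B => A.fv ∪ B.fv
  | .all n A => A.fv.erase n
  | .ex n A => A.fv.erase n

/-- Simultaneous substitution on terms. -/
def Tm.subst {S : Signature} (σ : ℕ → Tm S) : Tm S → Tm S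
  | .var n => σ n
  | .func f ts => .func f (fun i => (ts i).subst σ)

/-- Substitution of a (closed) term for a variable in a formula. -/
def Fm.substC {S : Signature} (x : ℕ) (t : Tm S) : Fm S → Fm S
  | .fals => .fals
  | .eq a b => .eq (a.subst (fun n => if n = x then t else .var n))
      (b.subst (fun n => if n = x then t else .var n))
  | .pred Q ts => .pred Q (fun i => (ts i).subst (fun n => if n = x then t else .var n))
  | .ind P ts => .ind P (fun i => (ts i).subst (fun n => if n = x then t else .var n))
  | .not A => .not (A.substC x t)
  | .and A B => .and (A.substC x t) (B.substC x t)
  | .or A B => .or (A.substC x t) (B.substC x t)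
  | .imp A B => .imp (A.substC x t) (B.substC x t)
  | .all n A => if n = x then .all n A else .all n (A.substC x t)
  | .ex n A => if n = x then .ex n A else .ex n (A.substC x t)

/-- A production rule for inductive predicates. -/
structure ProdRule (S : Signature) : Type where
  concl : S.IndPred
  conclArgs : Fin (S.arI concl) → Tm S
  ordPrems : List ((Q : S.Pred) × (Fin (S.arP Q) → Tm S))
  indPrems : List ((P : S.IndPred) × (Fin (S.arI P) → Tm S))

/-- The monotone operator determined by a set of production rules over a structure. -/
def step {S : Signature} (M : Struc S) (Φ : List (ProdRule S))
    (X : Set ((P : S.IndPred) × (Fin (S.arI P) → M.U))) :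
    Set ((P : S.IndPred) × (Fin (S.arI P) → M.U)) :=
  { v | ∃ r ∈ Φ, ∃ ρ : ℕ → M.U,
      (∀ q ∈ r.ordPrems, (fun i => (q.2 i).eval M ρ) ∈ M.interpP q.1) ∧
      (∀ p ∈ r.indPrems, ⟨p.1, fun i => (p.2 i).eval M ρ⟩ ∈ X) ∧
      v = ⟨r.concl, fun i => (r.conclArgs i).eval M ρ⟩ }

theorem step_mono {S : Signature} (M : Struc S) (Φ : List (ProdRule S)) :
    Monotone (step M Φ) := by
  rintro X Y h v ⟨r, hr, ρ, hq, hp, hv⟩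
  exact ⟨r, hr, ρ, hq, fun p hp' => h (hp p hp'), hv⟩

/-- The operator for the production rules, as an order homomorphism. -/
def stepHom {S : Signature} (M : Struc S) (Φ : List (ProdRule S)) :
    Set ((P : S.IndPred) × (Fin (S.arI P) → M.U)) →o
      Set ((P : S.IndPred) × (Fin (S.arI P) → M.U)) :=
  ⟨step M Φ, step_mono M Φ⟩

/-- A structure is a standard model for `(S, Φ)` if it interprets the inductive
predicates by the least fixpoint of the operator for `Φ`. -/
def Standard {S : Signature} (M : Struc S) (Φ : List (ProdRule S)) : Prop :=
  M.interpI = OrderHom.lfp (stepHom M Φ)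

/-- The variables occurring in a production rule. -/
def ProdRule.vars {S : Signature} (r : ProdRule S) : Finset ℕ :=
  (Finset.univ.biUnion fun i => (r.conclArgs i).fv) ∪
    (r.ordPrems.foldr (fun q s => s ∪ Finset.univ.biUnion fun i => (q.2 i).fv) ∅) ∪
    (r.indPrems.foldr (fun p s => s ∪ Finset.univ.biUnion fun i => (p.2 i).fv) ∅)

def bigAnd {S : Signature} : List (Fm S) → Fm S
  | [] => .not .fals
  | A :: l => .and A (bigAnd l)

def bigOr {S : Signature} : List (Fm S) → Fm S
  | [] => .fals
  | A :: l => .or A (bigOr l)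

def exList {S : Signature} : List ℕ → Fm S → Fm S
  | [], A => A
  | n :: l, A => .ex n (exList l A)

/-- The `k`-fold syntactic unfolding `P^{(k)}(t⃗)` of an inductive predicate:
`P^{(0)}(t⃗) ≡ ⊥` and `P^{(k+1)}(t⃗)` is the disjunction, over production rules with
conclusion `P t⃗₀`, of `∃y⃗ (t⃗ = t⃗₀ ∧ ⋀ Q_l u⃗_l ∧ ⋀ P_{j_p}^{(k)}(t⃗_p))`, with the
rule variables `y⃗` renamed to be fresh for `t⃗`. -/
def unfold {S : Signature} [DecidableEq S.IndPred] (Φ : List (ProdRule S)) :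
    ℕ → (P : S.IndPred) → (Fin (S.arI P) → Tm S) → Fm S
  | 0, _, _ => .fals
  | (k+1), P, ts =>
    bigOr (Φ.map fun r =>
      if h : r.concl = P then
        let N : ℕ := ((Finset.univ.biUnion fun i => (ts i).fv).sup id) + 1
        let σ : ℕ → Tm S := fun n => .var (n + N)
        exList ((r.vars.sort (· ≤ ·)).map (· + N))
          (.and (bigAnd ((List.finRange (S.arI P)).map fun i =>
              .eq (ts i) (((h ▸ r.conclArgs) i).subst σ)))
            (.and (bigAnd (r.ordPrems.map fun q => .pred q.1 fun i => (q.2 i).subst σ))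
              (bigAnd (r.indPrems.map fun p => unfold Φ k p.1 fun i => (p.2 i).subst σ))))
      else .fals)

/-! Downward Löwenheim–Skolem: closing `M` under Skolem functions for the countably many
formulas gives a countable set which passes the Tarski–Vaught test, hence carries an elementary
substructure `N`; in particular `N` satisfies the same closed formulas as `M`.
Standardness transfers to `N` because it is a formula-by-formula property: in a standard model
`P t⃗` holds iff some finite unfolding `P^{(k)}(t⃗)` does, and the unfoldings are ordinary
formulas, evaluated in `N` as in `M`. -/

namespace Tm
variable {S : Signature}

noncomputable def encode [Encodable S.Func] : Tm S → ℕ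
  | .var n => Nat.pair 0 n
  | .func f ts => Nat.pair 1 (Nat.pair (Encodable.encode f)
      (Encodable.encode (List.ofFn fun i => (ts i).encode)))

theorem encode_injective [Encodable S.Func] : Function.Injective (encode (S := S)) := by
  intro t u h
  induction t generalizing u with
  | var n => cases u <;> simp_all [encode, Nat.pair_eq_pair]
  | func f ts ih =>
    cases u with
    | var m => simp [encode, Nat.pair_eq_pair] at h
    | func g us =>
      simp only [encode, Nat.pair_eq_pair, Encodable.encode_inj, true_and] at h
      obtain ⟨rfl, h⟩ := h
      rw [List.ofFn_inj, funext_iff] at h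
      exact congrArg _ (funext fun i => ih i (h i))

instance [Countable S.Func] : Countable (Tm S) :=
  have := Encodable.ofCountable S.Func
  encode_injective.countable

end Tm

namespace Fm
variable {S : Signature}

noncomputable def encode [Encodable (Tm S)] [Encodable S.Pred] [Encodable S.IndPred] :
    Fm S → ℕ
  | .fals => Nat.pair 0 0
  | .eq t u => Nat.pair 1 (Encodable.encode (t, u))
  | .pred Q ts => Nat.pair 2 (Encodable.encode (Q, List.ofFn ts))
  | .ind P ts => Nat.pair 3 (Encodable.encode (P, List.ofFn ts))
  | .not A => Nat.pair 4 A.encode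
  | .and A B => Nat.pair 5 (Nat.pair A.encode B.encode)
  | .or A B => Nat.pair 6 (Nat.pair A.encode B.encode)
  | .imp A B => Nat.pair 7 (Nat.pair A.encode B.encode)
  | .all n A => Nat.pair 8 (Nat.pair n A.encode)
  | .ex n A => Nat.pair 9 (Nat.pair n A.encode)

theorem encode_injective [Encodable (Tm S)] [Encodable S.Pred] [Encodable S.IndPred] :
    Function.Injective (encode (S := S)) := by
  intro A B h
  induction A generalizing B with
  | pred Q ts | ind Q ts =>
    cases B <;> simp only [encode, Nat.pair_eq_pair, Encodable.encode_inj, Prod.mk.injEq] at h <;>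
      first | omega | (obtain ⟨_, rfl, h⟩ := h; rw [List.ofFn_inj] at h; rw [h])
  | not A ih =>
    cases B <;> simp only [encode, Nat.pair_eq_pair] at h <;> first | omega | rw [ih h.2]
  | and A A' ih ih' | or A A' ih ih' | imp A A' ih ih' =>
    cases B <;> simp only [encode, Nat.pair_eq_pair] at h <;>
      first | omega | rw [ih h.2.1, ih' h.2.2]
  | all n A ih | ex n A ih =>
    cases B <;> simp only [encode, Nat.pair_eq_pair] at h <;> first | omega | rw [h.2.1, ih h.2.2]
  | _ => cases B <;> simp_all [encode, Nat.pair_eq_pair]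

instance [Countable S.Func] [Countable S.Pred] [Countable S.IndPred] : Countable (Fm S) :=
  have := Encodable.ofCountable (Tm S)
  have := Encodable.ofCountable S.Pred
  have := Encodable.ofCountable S.IndPred
  encode_injective.countable

end Fm

section Semantics
variable {S : Signature} {M : Struc S}

theorem Tm.eval_congr {ρ ρ' : ℕ → M.U} (t : Tm S) (h : ∀ n ∈ t.fv, ρ n = ρ' n) :
    t.eval M ρ = t.eval M ρ' := by
  induction t with
  | var n => exact h n (Finset.mem_singleton_self n)
  | func f ts ih =>
    simp only [Tm.fv, Finset.mem_biUnion, Finset.mem_univ, true_and] at h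
    exact congrArg (M.interpF f) (funext fun i => ih i fun n hn => h n ⟨i, hn⟩)

theorem Tm.eval_subst (σ : ℕ → Tm S) (ρ : ℕ → M.U) (t : Tm S) :
    (t.subst σ).eval M ρ = t.eval M (fun n => (σ n).eval M ρ) := by
  induction t with
  | var n => rfl
  | func f ts ih => exact congrArg (M.interpF f) (funext ih)

theorem Tm.eval_args_congr {ρ ρ' : ℕ → M.U} {m : ℕ} (ts : Fin m → Tm S)
    (h : ∀ n ∈ Finset.univ.biUnion fun i => (ts i).fv, ρ n = ρ' n) :
    (fun i => (ts i).eval M ρ) = fun i => (ts i).eval M ρ' :=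
  funext fun i => (ts i).eval_congr fun n hn => h n (Finset.mem_biUnion.2 ⟨i, by simp, hn⟩)

theorem update_comp {α β : Type} (e : α → β) (ρ : ℕ → α) (n : ℕ) (a : α) :
    e ∘ update ρ n a = update (e ∘ ρ) n (e a) := by
  funext m
  by_cases hm : m = n <;> simp [update, hm]

theorem update_congr {α : Type} {ρ ρ' : ℕ → α} {s : Finset ℕ} (n : ℕ) (a : α)
    (h : ∀ m ∈ s.erase n, ρ m = ρ' m) : ∀ m ∈ s, update ρ n a m = update ρ' n a m := by
  intro m hm
  by_cases hmn : m = n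
  · simp [update, hmn]
  · simpa [update, hmn] using h m (Finset.mem_erase.2 ⟨hmn, hm⟩)

theorem sat_congr (A : Fm S) {ρ ρ' : ℕ → M.U} (h : ∀ n ∈ A.fv, ρ n = ρ' n) :
    Sat M ρ A ↔ Sat M ρ' A := by
  induction A generalizing ρ ρ' with
  | fals => rfl
  | eq t u =>
    simp only [Fm.fv, Finset.mem_union] at h
    simp only [Sat, t.eval_congr fun n hn => h n (.inl hn), u.eval_congr fun n hn => h n (.inr hn)]
  | pred Q ts => simp only [Sat, Tm.eval_args_congr ts h]
  | ind P ts => simp only [Sat, Tm.eval_args_congr ts h]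
  | not A ih => exact not_congr (ih h)
  | and A B ihA ihB | or A B ihA ihB | imp A B ihA ihB =>
    simp only [Fm.fv, Finset.mem_union] at h
    simp only [Sat]
    rw [ihA fun n hn => h n (.inl hn), ihB fun n hn => h n (.inr hn)]
  | all n A ih => exact forall_congr' fun a => ih (update_congr n a h)
  | ex n A ih => exact exists_congr fun a => ih (update_congr n a h)

theorem sat_bigAnd {ρ : ℕ → M.U} (l : List (Fm S)) :
    Sat M ρ (bigAnd l) ↔ ∀ A ∈ l, Sat M ρ A := by
  induction l with
  | nil => simp [bigAnd, Sat]
  | cons A l ih => simp [bigAnd, Sat, ih]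

theorem sat_bigOr {ρ : ℕ → M.U} (l : List (Fm S)) :
    Sat M ρ (bigOr l) ↔ ∃ A ∈ l, Sat M ρ A := by
  induction l with
  | nil => simp [bigOr, Sat]
  | cons A l ih => simp [bigOr, Sat, ih]

theorem sat_exList {A : Fm S} (xs : List ℕ) (ρ : ℕ → M.U) :
    Sat M ρ (exList xs A) ↔ ∃ ρ' : ℕ → M.U, (∀ n ∉ xs, ρ' n = ρ n) ∧ Sat M ρ' A := by
  induction xs generalizing ρ with
  | nil =>
    simp only [exList, List.not_mem_nil, not_false_eq_true, forall_const]
    exact ⟨fun h => ⟨ρ, fun _ => rfl, h⟩, fun ⟨ρ', h, hA⟩ => funext h ▸ hA⟩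
  | cons n xs ih =>
    simp only [exList, Sat, ih, List.mem_cons, not_or]
    constructor
    · rintro ⟨a, ρ', hρ', hA⟩
      exact ⟨ρ', fun m ⟨hmn, hm⟩ => by rw [hρ' m hm, update, if_neg hmn], hA⟩
    · rintro ⟨ρ', hρ', hA⟩
      refine ⟨ρ' n, ρ', fun m hm => ?_, hA⟩
      by_cases hmn : m = n
      · simp [update, hmn]
      · rw [update, if_neg hmn, hρ' m ⟨hmn, hm⟩]

end Semantics

section Kleene
variable {S : Signature}

theorem Monotone.exists_forall_mem_of_list {β γ : Type*} {s : ℕ → Set β} (hs : Monotone s)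
    (g : γ → β) {l : List γ} (h : ∀ x ∈ l, g x ∈ ⋃ k, s k) : ∃ K, ∀ x ∈ l, g x ∈ s K := by
  classical
  obtain ⟨K, hK⟩ := hs.directed_le.exists_mem_subset_of_finset_subset_biUnion
    (s := (l.map g).toFinset) (by simpa [Set.subset_def] using h)
  exact ⟨K, fun x hx => hK (by simpa using ⟨x, hx, rfl⟩)⟩

abbrev IndAtom (M : Struc S) : Type := (P : S.IndPred) × (Fin (S.arI P) → M.U)

variable (M : Struc S) (Φ : List (ProdRule S))

def RuleFires (r : ProdRule S) (X : Set (IndAtom M)) (ρ : ℕ → M.U) (v : IndAtom M) : Prop :=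
  (∀ q ∈ r.ordPrems, (fun i => (q.2 i).eval M ρ) ∈ M.interpP q.1) ∧
    (∀ p ∈ r.indPrems, ⟨p.1, fun i => (p.2 i).eval M ρ⟩ ∈ X) ∧
    v = ⟨r.concl, fun i => (r.conclArgs i).eval M ρ⟩

theorem mem_step {X : Set (IndAtom M)} {v : IndAtom M} :
    v ∈ step M Φ X ↔ ∃ r ∈ Φ, ∃ ρ, RuleFires M r X ρ v :=
  Iff.rfl

theorem step_iUnion_subset {c : ℕ → Set (IndAtom M)} (hc : Monotone c) :
    step M Φ (⋃ k, c k) ⊆ ⋃ k, step M Φ (c k) := by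
  rintro v ⟨r, hr, ρ, hord, hind, rfl⟩
  obtain ⟨K, hK⟩ := hc.exists_forall_mem_of_list
    (fun p : (P : S.IndPred) × (Fin (S.arI P) → Tm S) =>
      (⟨p.1, fun i => (p.2 i).eval M ρ⟩ : IndAtom M)) hind
  exact Set.mem_iUnion.2 ⟨K, r, hr, ρ, hord, hK, rfl⟩

def approx (k : ℕ) : Set (IndAtom M) :=
  (step M Φ)^[k] ∅

theorem approx_succ (k : ℕ) : approx M Φ (k + 1) = step M Φ (approx M Φ k) :=
  Function.iterate_succ_apply' _ _ _

theorem approx_monotone : Monotone (approx M Φ) := by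
  refine monotone_nat_of_le_succ fun k => ?_
  induction k with
  | zero => exact Set.empty_subset _
  | succ k ih => rw [approx_succ, approx_succ]; exact step_mono M Φ ih

theorem lfp_eq_iUnion_approx : OrderHom.lfp (stepHom M Φ) = ⋃ k, approx M Φ k := by
  apply le_antisymm
  · refine OrderHom.lfp_le _ ((step_iUnion_subset M Φ (approx_monotone M Φ)).trans ?_)
    exact Set.iUnion_subset fun k => approx_succ M Φ k ▸ Set.subset_iUnion _ (k + 1)
  · refine Set.iUnion_subset fun k => ?_
    induction k with
    | zero => exact Set.empty_subset _
    | succ k ih =>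
      rw [approx_succ, ← OrderHom.map_lfp (stepHom M Φ)]
      exact step_mono M Φ ih

end Kleene

section Unfold
variable {S : Signature}

theorem mem_foldr_union {γ : Type*} (bi : γ → Finset ℕ) (l : List γ) (x : ℕ) :
    x ∈ l.foldr (fun q s => s ∪ bi q) ∅ ↔ ∃ q ∈ l, x ∈ bi q := by
  induction l with
  | nil => simp
  | cons q l ih => simp [ih, or_comm]

theorem RuleFires.congr {M : Struc S} (r : ProdRule S) {X : Set (IndAtom M)} {ρ ρ' : ℕ → M.U}
    (h : ∀ n ∈ r.vars, ρ n = ρ' n) {v : IndAtom M} :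
    RuleFires M r X ρ v ↔ RuleFires M r X ρ' v := by
  have hvars : ∀ {m} (ts : Fin m → Tm S), (Finset.univ.biUnion fun i => (ts i).fv) ⊆ r.vars →
      (fun i => (ts i).eval M ρ) = fun i => (ts i).eval M ρ' := fun ts hts =>
    Tm.eval_args_congr ts fun n hn => h n (hts hn)
  unfold RuleFires
  rw [hvars r.conclArgs fun x hx => by simp [ProdRule.vars, hx]]
  refine and_congr (forall₂_congr fun q hq => ?_) (and_congr (forall₂_congr fun p hp => ?_) .rfl)
  · rw [hvars q.2 fun x hx => by
      simp only [ProdRule.vars, Finset.mem_union, mem_foldr_union]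
      exact .inl (.inr ⟨q, hq, hx⟩)]
  · rw [hvars p.2 fun x hx => by
      simp only [ProdRule.vars, Finset.mem_union, mem_foldr_union]
      exact .inr ⟨p, hp, hx⟩]

def freshShift {m : ℕ} (ts : Fin m → Tm S) : ℕ :=
  (Finset.univ.biUnion fun i => (ts i).fv).sup id + 1

variable [DecidableEq S.IndPred] (M : Struc S) (Φ : List (ProdRule S))

def unfoldBody (k : ℕ) (r : ProdRule S) {P : S.IndPred} (h : r.concl = P)
    (ts : Fin (S.arI P) → Tm S) (σ : ℕ → Tm S) : Fm S :=
  .and (bigAnd ((List.finRange (S.arI P)).map fun i =>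
      .eq (ts i) (((h ▸ r.conclArgs) i).subst σ)))
    (.and (bigAnd (r.ordPrems.map fun q => .pred q.1 fun i => (q.2 i).subst σ))
      (bigAnd (r.indPrems.map fun p => unfold Φ k p.1 fun i => (p.2 i).subst σ)))

theorem unfold_succ (k : ℕ) (P : S.IndPred) (ts : Fin (S.arI P) → Tm S) :
    unfold Φ (k + 1) P ts = bigOr (Φ.map fun r =>
      if h : r.concl = P then
        exList ((r.vars.sort (· ≤ ·)).map (· + freshShift ts))
          (unfoldBody Φ k r h ts fun n => .var (n + freshShift ts))
      else .fals) :=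
  rfl

section Step
variable {M Φ} {k : ℕ}
  (ih : ∀ P ts (ρ : ℕ → M.U),
    Sat M ρ (unfold Φ k P ts) ↔ ⟨P, fun i => (ts i).eval M ρ⟩ ∈ approx M Φ k)
include ih

theorem sat_unfoldBody (r : ProdRule S) (ts : Fin (S.arI r.concl) → Tm S) (N : ℕ)
    (ρ : ℕ → M.U) :
    Sat M ρ (unfoldBody Φ k r rfl ts fun n => .var (n + N)) ↔
      RuleFires M r (approx M Φ k) (fun n => ρ (n + N))
        ⟨r.concl, fun i => (ts i).eval M ρ⟩ := by
  simp only [unfoldBody, RuleFires, Sat, sat_bigAnd, List.forall_mem_map, Tm.eval_subst, ih,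
    Tm.eval, List.mem_finRange, forall_const, Sigma.mk.inj_iff, heq_eq_eq, true_and, funext_iff]
  exact and_rotate

theorem sat_exList_unfoldBody (r : ProdRule S) (ts : Fin (S.arI r.concl) → Tm S)
    (ρ : ℕ → M.U) :
    Sat M ρ (exList ((r.vars.sort (· ≤ ·)).map (· + freshShift ts))
        (unfoldBody Φ k r rfl ts fun n => .var (n + freshShift ts))) ↔
      ∃ ρ₀, RuleFires M r (approx M Φ k) ρ₀ ⟨r.concl, fun i => (ts i).eval M ρ⟩ := by
  set N := freshShift ts
  have hts : ∀ {ρ' : ℕ → M.U}, (∀ m < N, ρ' m = ρ m) →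
      (fun i => (ts i).eval M ρ') = fun i => (ts i).eval M ρ := fun h =>
    Tm.eval_args_congr ts fun n hn => h n (Nat.lt_succ_of_le (Finset.le_sup (f := id) hn))
  rw [sat_exList]
  constructor
  · rintro ⟨ρ', hρ', hbody⟩
    rw [sat_unfoldBody ih, hts fun m hm => hρ' m (by simp only [List.mem_map]; omega)] at hbody
    exact ⟨_, hbody⟩
  · rintro ⟨ρ₀, hfires⟩
    let ρ' m := if N ≤ m ∧ m - N ∈ r.vars then ρ₀ (m - N) else ρ m
    refine ⟨ρ', fun m hm => if_neg fun ⟨h1, h2⟩ =>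
      hm (List.mem_map.2 ⟨m - N, (Finset.mem_sort _).2 h2, by omega⟩), ?_⟩
    rw [sat_unfoldBody ih, hts fun m hm => if_neg fun ⟨h1, _⟩ => by omega]
    exact (RuleFires.congr r fun n hn => by simp [ρ', hn]).1 hfires

end Step

variable {M Φ}

theorem sat_unfold (k : ℕ) (P : S.IndPred) (ts : Fin (S.arI P) → Tm S) (ρ : ℕ → M.U) :
    Sat M ρ (unfold Φ k P ts) ↔ ⟨P, fun i => (ts i).eval M ρ⟩ ∈ approx M Φ k := by
  induction k generalizing P ts ρ with
  | zero => exact iff_of_false id id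
  | succ k ih =>
    rw [unfold_succ, sat_bigOr, approx_succ, mem_step]
    simp only [List.mem_map, exists_exists_and_eq_and]
    refine exists_congr fun r => and_congr_right fun _ => ?_
    by_cases h : r.concl = P
    · subst h
      rw [dif_pos rfl, sat_exList_unfoldBody ih]
    · rw [dif_neg h]
      exact iff_of_false id fun ⟨_, hfires⟩ => h (congrArg Sigma.fst hfires.2.2).symm

theorem mem_lfp_iff_exists_sat_unfold (P : S.IndPred) (ts : Fin (S.arI P) → Tm S)
    (ρ : ℕ → M.U) :
    ⟨P, fun i => (ts i).eval M ρ⟩ ∈ OrderHom.lfp (stepHom M Φ) ↔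
      ∃ k, Sat M ρ (unfold Φ k P ts) := by
  simp only [lfp_eq_iUnion_approx, Set.mem_iUnion, sat_unfold]

theorem Standard.sat_ind_iff (h : Standard M Φ) (P : S.IndPred) (ts : Fin (S.arI P) → Tm S)
    (ρ : ℕ → M.U) : Sat M ρ (.ind P ts) ↔ ∃ k, Sat M ρ (unfold Φ k P ts) := by
  rw [← mem_lfp_iff_exists_sat_unfold, ← h]
  rfl

theorem standard_of_sat_ind_iff [Nonempty M.U]
    (h : ∀ P ts (ρ : ℕ → M.U), Sat M ρ (.ind P ts) ↔ ∃ k, Sat M ρ (unfold Φ k P ts)) :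
    Standard M Φ := by
  ext ⟨P, args⟩
  let c := Classical.arbitrary M.U
  let ρ : ℕ → M.U := Function.extend Fin.val args fun _ => c
  have hargs : args = fun i => (Tm.var i.1 : Tm S).eval M ρ :=
    funext fun i => (Fin.val_injective.extend_apply args (fun _ => c) i).symm
  rw [hargs, mem_lfp_iff_exists_sat_unfold, ← h]
  rfl

end Unfold

section Elementary
variable {S : Signature}

def IsElementaryMap (N M : Struc S) (e : N.U → M.U) : Prop :=
  ∀ (A : Fm S) (ρ : ℕ → N.U), Sat N ρ A ↔ Sat M (e ∘ ρ) A

variable {N M : Struc S} [Nonempty N.U] {e : N.U → M.U}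

theorem Standard.of_isElementaryMap {Φ : List (ProdRule S)} (he : IsElementaryMap N M e)
    (hM : Standard M Φ) : Standard N Φ := by
  classical
  exact standard_of_sat_ind_iff fun P ts ρ =>
    (he _ ρ).trans ((hM.sat_ind_iff P ts _).trans (exists_congr fun _ => (he _ ρ).symm))

theorem IsElementaryMap.forall_sat_iff (he : IsElementaryMap N M e) {A : Fm S}
    (hA : A.fv = ∅) : (∀ ρ : ℕ → M.U, Sat M ρ A) ↔ ∀ ρ : ℕ → N.U, Sat N ρ A := by
  refine ⟨fun h ρ => (he A ρ).2 (h _), fun h ρ => ?_⟩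
  refine (sat_congr A fun n hn => ?_).1 ((he A fun _ => Classical.arbitrary _).1 (h _))
  exact absurd (hA ▸ hn) (Finset.notMem_empty n)

end Elementary

section TarskiVaught
variable {S : Signature} (M : Struc S) (s : Set M.U)

abbrev Struc.restrict (hs : ∀ f v, (∀ i, v i ∈ s) → M.interpF f v ∈ s) : Struc S where
  U := s
  interpF f v := ⟨M.interpF f (Subtype.val ∘ v), hs f _ fun i => (v i).2⟩
  interpP Q := {v | Subtype.val ∘ v ∈ M.interpP Q}
  interpI := {v | ⟨v.1, Subtype.val ∘ v.2⟩ ∈ M.interpI}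

theorem Struc.eval_restrict {hs : ∀ f v, (∀ i, v i ∈ s) → M.interpF f v ∈ s}
    (ρ : ℕ → s) (t : Tm S) : (t.eval (M.restrict s hs) ρ).1 = t.eval M (Subtype.val ∘ ρ) := by
  induction t with
  | var n => rfl
  | func f ts ih => exact congrArg (M.interpF f) (funext ih)

def WitnessClosed : Prop :=
  ∀ (A : Fm S) (n : ℕ) (ρ : ℕ → M.U), (∀ m, ρ m ∈ s) →
    (∃ a, Sat M (update ρ n a) A) → ∃ a ∈ s, Sat M (update ρ n a) A

variable {M s}

theorem WitnessClosed.exists_mem_iff (hs : WitnessClosed M s) {A : Fm S} {n : ℕ}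
    {ρ : ℕ → M.U} (hρ : ∀ m, ρ m ∈ s) :
    (∃ a ∈ s, Sat M (update ρ n a) A) ↔ ∃ a, Sat M (update ρ n a) A :=
  ⟨fun ⟨a, _, h⟩ => ⟨a, h⟩, hs A n ρ hρ⟩

theorem WitnessClosed.forall_mem_iff (hs : WitnessClosed M s) {A : Fm S} {n : ℕ}
    {ρ : ℕ → M.U} (hρ : ∀ m, ρ m ∈ s) :
    (∀ a ∈ s, Sat M (update ρ n a) A) ↔ ∀ a, Sat M (update ρ n a) A := by
  refine ⟨fun h a => ?_, fun h a _ => h a⟩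
  by_contra ha
  obtain ⟨b, hb, hnb⟩ := hs (.not A) n ρ hρ ⟨a, ha⟩
  exact hnb (h b hb)

theorem WitnessClosed.interpF_mem (hs : WitnessClosed M s) (hne : s.Nonempty) (f : S.Func)
    (v : Fin (S.arF f) → M.U) (hv : ∀ i, v i ∈ s) : M.interpF f v ∈ s := by
  obtain ⟨c, hc⟩ := hne
  let ρ : ℕ → M.U := fun m => if h : m < S.arF f then v ⟨m, h⟩ else c
  have hρ : ∀ m, ρ m ∈ s := fun m => by
    by_cases hm : m < S.arF f <;> simp [ρ, hm, hv, hc]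
  -- `f v` is the only witness of `∃ y, y = f x⃗` at `x⃗ := v`
  have hgraph : ∀ b, Sat M (update ρ (S.arF f) b) (.eq (.var (S.arF f)) (.func f (.var ·)))
      ↔ b = M.interpF f v := fun b => by
    have hargs : (fun i : Fin (S.arF f) => update ρ (S.arF f) b i) = v :=
      funext fun i => by simp [update, i.isLt.ne, ρ]
    simp only [Sat, Tm.eval, update, if_true] at hargs ⊢
    rw [hargs]
  obtain ⟨a, ha, hsat⟩ := hs _ _ ρ hρ ⟨_, (hgraph _).2 rfl⟩
  exact (hgraph a).1 hsat ▸ ha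

theorem WitnessClosed.isElementaryMap_val (hs : WitnessClosed M s)
    (hF : ∀ f v, (∀ i, v i ∈ s) → M.interpF f v ∈ s) :
    IsElementaryMap (M.restrict s hF) M Subtype.val := by
  intro A
  induction A with
  | fals => exact fun _ => .rfl
  | eq t u => intro ρ; simp only [Sat, Subtype.ext_iff, Struc.eval_restrict]
  | pred Q ts | ind Q ts =>
    intro ρ; simp only [Sat, Set.mem_ofPred_eq, Function.comp_def, Struc.eval_restrict]
  | not A ih => exact fun ρ => not_congr (ih ρ)
  | and A B ihA ihB | or A B ihA ihB | imp A B ihA ihB =>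
    intro ρ; simp only [Sat]; rw [ihA, ihB]
  | all n A ih =>
    intro ρ
    simp only [Sat, ih, update_comp, Subtype.forall]
    exact hs.forall_mem_iff fun m => (ρ m).2
  | ex n A ih =>
    intro ρ
    simp only [Sat, ih, update_comp, Subtype.exists, exists_prop]
    exact hs.exists_mem_iff fun m => (ρ m).2

end TarskiVaught

section SkolemHull
variable {S : Signature} (M : Struc S) [Nonempty M.U]

/-- The Skolem function of `∃ n, A`, reading the values of the variables `0, 1, …` off the
list `l` (and an arbitrary value beyond its end). -/
noncomputable def skolem (A : Fm S) (n : ℕ) (l : List M.U) : M.U :=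
  Classical.epsilon fun a => Sat M (update (l.getD · (Classical.arbitrary _)) n a) A

def skolemStage : ℕ → Set M.U
  | 0 => {Classical.arbitrary _}
  | k + 1 => skolemStage k ∪
      ⋃ p : Fm S × ℕ, skolem M p.1 p.2 '' {l | ∀ x ∈ l, x ∈ skolemStage k}

def skolemHull : Set M.U :=
  ⋃ k, skolemStage M k

theorem skolemStage_monotone : Monotone (skolemStage M) :=
  monotone_nat_of_le_succ fun _ => Set.subset_union_left

theorem skolemStage_countable [Countable S.Func] [Countable S.Pred] [Countable S.IndPred]
    (k : ℕ) : (skolemStage M k).Countable := by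
  induction k with
  | zero => exact Set.countable_singleton _
  | succ k ih =>
    have := ih.to_subtype
    refine ih.union (Set.countable_iUnion fun p => .image ?_ _)
    exact Set.range_list_map_coe (skolemStage M k) ▸ Set.countable_range _

theorem skolemHull_countable [Countable S.Func] [Countable S.Pred] [Countable S.IndPred] :
    (skolemHull M).Countable :=
  Set.countable_iUnion (skolemStage_countable M)

theorem skolemHull_nonempty : (skolemHull M).Nonempty :=
  ⟨_, Set.mem_iUnion.2 ⟨0, rfl⟩⟩

theorem skolemHull_witnessClosed : WitnessClosed M (skolemHull M) := by
  intro A n ρ hρ ⟨a, ha⟩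
  let l := (List.range (A.fv.sup id + 1)).map ρ
  have hl : ∀ b, ∀ m ∈ A.fv,
      update ρ n b m = update (l.getD · (Classical.arbitrary _)) n b m :=
    fun b => update_congr n b fun m hm => by
      have hm : m < A.fv.sup id + 1 :=
        Nat.lt_succ_of_le (Finset.le_sup (f := id) (Finset.mem_of_mem_erase hm))
      rw [List.getD_eq_getElem?_getD, List.getElem?_map, List.getElem?_range hm]
      rfl
  obtain ⟨K, hK⟩ := (skolemStage_monotone M).exists_forall_mem_of_list id (l := l)
    fun x hx => by
      obtain ⟨m, -, rfl⟩ := List.mem_map.1 hx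
      exact hρ m
  have hspec : Sat M (update (l.getD · (Classical.arbitrary _)) n (skolem M A n l)) A :=
    Classical.epsilon_spec (p := fun b => Sat M (update (l.getD · _) n b) A)
      ⟨a, (sat_congr A (hl a)).1 ha⟩
  have hmem : skolem M A n l ∈ skolemStage M (K + 1) :=
    .inr (Set.mem_iUnion.2 ⟨(A, n), l, hK, rfl⟩)
  exact ⟨_, Set.mem_iUnion.2 ⟨K + 1, hmem⟩, (sat_congr A (hl _)).2 hspec⟩

theorem exists_countable_isElementaryMap [Countable S.Func] [Countable S.Pred]
    [Countable S.IndPred] :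
    ∃ (N : Struc S) (e : N.U → M.U), Nonempty N.U ∧ Countable N.U ∧ IsElementaryMap N M e := by
  have hF := (skolemHull_witnessClosed M).interpF_mem (skolemHull_nonempty M)
  exact ⟨M.restrict _ hF, Subtype.val, (skolemHull_nonempty M).to_subtype,
    (skolemHull_countable M).to_subtype, (skolemHull_witnessClosed M).isElementaryMap_val hF⟩

end SkolemHull

/-- every standard model for `(Σ, Φ)` (over a countable signature) is
elementarily equivalent to a countable standard model for `(Σ, Φ)`. -/
theorem stmt10 {S : Signature} [Countable S.Func] [Countable S.Pred]
    [Countable S.IndPred] (Φ : List (ProdRule S)) (M : Struc S) [Nonempty M.U]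
    (hstd : Standard M Φ) :
    ∃ M' : Struc S, Nonempty M'.U ∧ Countable M'.U ∧ Standard M' Φ ∧
      ∀ A : Fm S, A.fv = ∅ →
        ((∀ ρ : ℕ → M.U, Sat M ρ A) ↔ (∀ ρ : ℕ → M'.U, Sat M' ρ A)) := by
  obtain ⟨N, e, hne, hcount, he⟩ := exists_countable_isElementaryMap M
  exact ⟨N, hne, hcount, hstd.of_isElementaryMap he, fun A hA => he.forall_sat_iff hA⟩
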